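/- arXiv:0809.2979 — 5 statements merged into one kernel-verified Lean document; each statement's English description precedes it below -/
import Mathlib

section
/- Every k-uniform hypergraph with maximum degree Δ ≥ 1 has a proper vertex coloring (no edge monochromatic) using at most ⌈4·Δ^(1/(k-1))⌉ colors. -/
/-!
Write `N(S)` for the number of `q`-colourings of `V` under which no edge contained in `S` is
monochromatic. We show `N(S \ {v}) ≤ 2 N(S)` by strong induction on `S`. A colouring counted
on the left but not on the right makes some edge `e ∋ v`, `e ⊆ S`, monochromatic while being
proper on `S \ e`; since properness on `S \ e` ignores the colours on `e`, these colourings number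
at most `q^(1-k) N(S \ e) ≤ q^(1-k) 2^(k-1) N(S \ {v})`, the last step by induction applied
along `e \ {v}`. Summing over the at most `Δ` such edges and using `2^k Δ ≤ q^(k-1)` shows that at
most half of the colourings are lost. Removing the vertices one at a time from `V` then gives
`N(V) ≥ 2^(-|V|) q^|V| > 0`. Finally `q = ⌈4 Δ^(1/(k-1))⌉` satisfies
`q^(k-1) ≥ 4^(k-1) Δ ≥ 2^k Δ`.
-/

open Finset

theorem le_two_pow_card_mul_of_erase_le {ι : Type*} [DecidableEq ι] {N : Finset ι → ℕ}
    {S : Finset ι} (h : ∀ T ⊆ S, ∀ v ∈ T, N (T.erase v) ≤ 2 * N T) :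
    ∀ B ⊆ S, N (S \ B) ≤ 2 ^ #B * N S := by
  intro B
  induction B using Finset.induction_on with
  | empty => simp
  | @insert u B hu ih =>
    intro hBS
    have huS : u ∈ S \ B := mem_sdiff.2 ⟨hBS (mem_insert_self u B), hu⟩
    calc N (S \ insert u B) = N ((S \ B).erase u) := by rw [sdiff_insert]
      _ ≤ 2 * N (S \ B) := h _ sdiff_subset u huS
      _ ≤ 2 * (2 ^ #B * N S) := Nat.mul_le_mul_left _ (ih ((subset_insert u B).trans hBS))
      _ = 2 ^ #(insert u B) * N S := by rw [card_insert_of_notMem hu, pow_succ]; ring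

-- Recolouring `B` arbitrarily is invisible to `P`, and the old colouring is recovered from the
-- colour of `v`.
open scoped Classical in
theorem card_pow_mul_card_filter_eqOn_le {V α : Type*} [Fintype V] [DecidableEq V] [Fintype α]
    (P : (V → α) → Prop) {B : Finset V} {v : V} (hv : v ∉ B)
    (hP : ∀ f g : V → α, (∀ w ∉ B, f w = g w) → P f → P g) :
    Fintype.card α ^ #B * #{f | P f ∧ ∀ x ∈ B, f x = f v} ≤ #{f | P f} := by
  let recolor : (V → α) × (B → α) → V → α := fun p w => if h : w ∈ B then p.2 ⟨w, h⟩ else p.1 w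
  have key := card_le_card_of_injOn recolor
    (s := ({f | P f ∧ ∀ x ∈ B, f x = f v} : Finset _) ×ˢ (univ : Finset (B → α)))
    (t := ({f | P f} : Finset _)) ?_ ?_
  · simpa [card_product, mul_comm] using key
  · rintro ⟨f, g⟩ hfg
    simp only [mem_coe, mem_product, mem_filter_univ, mem_univ, and_true] at hfg ⊢
    exact hP f _ (fun w hw => by simp [recolor, hw]) hfg.1
  · rintro ⟨f, g⟩ hfg ⟨f', g'⟩ hfg' heq
    simp only [mem_coe, mem_product, mem_filter_univ, mem_univ, and_true] at hfg hfg'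
    have hfv : f v = f' v := by simpa [recolor, hv] using congrFun heq v
    ext w
    · by_cases hw : w ∈ B
      · exact (hfg.2 w hw).trans (hfv.trans (hfg'.2 w hw).symm)
      · simpa [recolor, hw] using congrFun heq w
    · simpa [recolor] using congrFun heq w

section IsProperOn

variable {V α : Type*}

def IsProperOn (E : Finset (Finset V)) (S : Finset V) (f : V → α) : Prop :=
  ∀ e ∈ E, e ⊆ S → ∃ x ∈ e, ∃ y ∈ e, f x ≠ f y

variable {E : Finset (Finset V)} {S T : Finset V} {f g : V → α}

theorem IsProperOn.mono (hf : IsProperOn E S f) (hTS : T ⊆ S) : IsProperOn E T f :=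
  fun e he heT => hf e he (heT.trans hTS)

theorem IsProperOn.congr (hf : IsProperOn E S f) (hfg : ∀ w ∈ S, f w = g w) :
    IsProperOn E S g := by
  intro e he heS
  obtain ⟨x, hx, y, hy, hxy⟩ := hf e he heS
  exact ⟨x, hx, y, hy, by rwa [← hfg x (heS hx), ← hfg y (heS hy)]⟩

theorem isProperOn_empty (hE : ∅ ∉ E) (f : V → α) : IsProperOn E ∅ f := by
  intro e he heS
  rw [subset_empty.1 heS] at he
  exact absurd he hE

end IsProperOn

section ProperCount

open scoped Classical

variable {V : Type*} [Fintype V] [DecidableEq V] (E : Finset (Finset V)) (α : Type*) [Fintype α]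

noncomputable def properCount (S : Finset V) : ℕ := #{f : V → α | IsProperOn E S f}

variable {E α}

theorem properCount_erase_le_add_sum (S : Finset V) (v : V) :
    properCount E α (S.erase v) ≤ properCount E α S +
      ∑ e ∈ E with v ∈ e ∧ e ⊆ S,
        #{f : V → α | IsProperOn E (S \ e) f ∧ ∀ x ∈ e.erase v, f x = f v} := by
  unfold properCount
  refine (card_le_card ?_).trans
    ((card_union_le _ _).trans (Nat.add_le_add_left card_biUnion_le _))
  intro f hf
  rw [mem_filter_univ] at hf
  by_cases hfS : IsProperOn E S f
  · exact mem_union_left _ ((mem_filter_univ _).2 hfS)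
  refine mem_union_right _ (mem_biUnion.2 ?_)
  unfold IsProperOn at hfS
  push Not at hfS
  obtain ⟨e, he, heS, hmono⟩ := hfS
  have hve : v ∈ e := by
    by_contra hve
    obtain ⟨x, hx, y, hy, hxy⟩ := hf e he (subset_erase.2 ⟨heS, hve⟩)
    exact hxy (hmono x hx y hy)
  refine ⟨e, mem_filter.2 ⟨he, hve, heS⟩, (mem_filter_univ _).2 ⟨?_, fun x hx =>
    hmono x (mem_of_mem_erase hx) v hve⟩⟩
  exact hf.mono fun x hx =>
    mem_erase.2 ⟨fun hxv => (mem_sdiff.1 hx).2 (hxv ▸ hve), (mem_sdiff.1 hx).1⟩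

theorem properCount_erase_le_two_mul [Nonempty α] {k Δ : ℕ} (hk : 0 < k)
    (hα : 2 ^ k * Δ ≤ Fintype.card α ^ (k - 1))
    (huniform : ∀ e ∈ E, #e = k) (hdeg : ∀ v : V, #{e ∈ E | v ∈ e} ≤ Δ) (S : Finset V) :
    ∀ v ∈ S, properCount E α (S.erase v) ≤ 2 * properCount E α S := by
  induction S using Finset.strongInduction with
  | H S ih =>
    intro v hv
    set q := Fintype.card α
    set N := properCount E α
    have hchain : ∀ B ⊆ S.erase v, N (S.erase v \ B) ≤ 2 ^ #B * N (S.erase v) :=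
      le_two_pow_card_mul_of_erase_le fun T hT => ih T (hT.trans_ssubset (erase_ssubset hv))
    have hbad : ∀ e ∈ ({e ∈ E | v ∈ e ∧ e ⊆ S} : Finset _), q ^ (k - 1) *
        #{f : V → α | IsProperOn E (S \ e) f ∧ ∀ x ∈ e.erase v, f x = f v} ≤
          2 ^ (k - 1) * N (S.erase v) := by
      intro e he
      obtain ⟨heE, hve, heS⟩ := mem_filter.1 he
      have hcard : #(e.erase v) = k - 1 := by rw [card_erase_of_mem hve, huniform e heE]
      have hsdiff : S.erase v \ e.erase v = S \ e := by
        ext x; simp only [mem_sdiff, mem_erase]; grind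
      have hfree := card_pow_mul_card_filter_eqOn_le (fun f : V → α => IsProperOn E (S \ e) f)
        (notMem_erase v e) fun f g hfg hf => hf.congr fun w hw =>
          hfg w fun hwe => (mem_sdiff.1 hw).2 (mem_of_mem_erase hwe)
      have hchain_e := hchain _ (erase_subset_erase v heS)
      rw [hcard] at hfree hchain_e
      rw [hsdiff] at hchain_e
      exact hfree.trans hchain_e
    have hD : #{e ∈ E | v ∈ e ∧ e ⊆ S} ≤ Δ :=
      (card_le_card (monotone_filter_right E fun _ _ => And.left)).trans (hdeg v)
    have hstep :
        q ^ (k - 1) * N (S.erase v) ≤ q ^ (k - 1) * N S + Δ * (2 ^ (k - 1) * N (S.erase v)) :=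
      calc q ^ (k - 1) * N (S.erase v)
          ≤ q ^ (k - 1) * N S + ∑ e ∈ E with v ∈ e ∧ e ⊆ S, q ^ (k - 1) *
            #{f : V → α | IsProperOn E (S \ e) f ∧ ∀ x ∈ e.erase v, f x = f v} := by
            rw [← mul_sum, ← mul_add]
            exact Nat.mul_le_mul_left _ (properCount_erase_le_add_sum S v)
        _ ≤ q ^ (k - 1) * N S + Δ * (2 ^ (k - 1) * N (S.erase v)) := by
            grw [sum_le_sum hbad, sum_const, smul_eq_mul, hD]
    have hq : 0 < q ^ (k - 1) := pow_pos Fintype.card_pos _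
    have h2k : 2 ^ k = 2 * 2 ^ (k - 1) := by rw [← pow_succ']; congr 1; omega
    have hα' := Nat.mul_le_mul_right (N (S.erase v)) hα
    rw [h2k] at hα'
    refine Nat.le_of_mul_le_mul_left (c := q ^ (k - 1)) ?_ hq
    nlinarith

theorem exists_isProperOn_univ [Nonempty α] {k Δ : ℕ} (hk : 0 < k)
    (hα : 2 ^ k * Δ ≤ Fintype.card α ^ (k - 1))
    (huniform : ∀ e ∈ E, #e = k) (hdeg : ∀ v : V, #{e ∈ E | v ∈ e} ≤ Δ) :
    ∃ f : V → α, IsProperOn E univ f := by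
  have hempty : ∅ ∉ E := fun h => hk.ne' (by simpa using (huniform ∅ h).symm)
  have hbound : properCount E α ∅ ≤ 2 ^ #(univ : Finset V) * properCount E α univ := by
    simpa using le_two_pow_card_mul_of_erase_le
      (fun T _ => properCount_erase_le_two_mul hk hα huniform hdeg T) univ subset_rfl
  have hpos : 0 < properCount E α ∅ := by
    simpa [properCount, isProperOn_empty hempty] using pow_pos Fintype.card_pos _
  obtain ⟨f, hf⟩ := card_pos.1 (Nat.pos_of_mul_pos_left (hpos.trans_le hbound))
  exact ⟨f, (mem_filter_univ f).1 hf⟩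

end ProperCount

theorem two_pow_mul_le_ceil_pow (k Δ : ℕ) (hk : 2 ≤ k) :
    2 ^ k * Δ ≤ ⌈(4 : ℝ) * (Δ : ℝ) ^ ((1 : ℝ) / ((k : ℝ) - 1))⌉₊ ^ (k - 1) := by
  have hk1 : ((k - 1 : ℕ) : ℝ) = (k : ℝ) - 1 := by
    push_cast [Nat.cast_sub (by omega : 1 ≤ k)]; ring
  have hroot : ((Δ : ℝ) ^ ((1 : ℝ) / ((k : ℝ) - 1))) ^ (k - 1) = Δ := by
    rw [← Real.rpow_natCast, ← Real.rpow_mul (Nat.cast_nonneg _), hk1,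
      one_div_mul_cancel (by rw [← hk1]; exact_mod_cast (by omega : k - 1 ≠ 0)), Real.rpow_one]
  have h2k : (2 : ℝ) ^ k ≤ 4 ^ (k - 1) := by
    rw [show (4 : ℝ) = 2 ^ 2 by norm_num, ← pow_mul]
    exact pow_le_pow_right₀ (by norm_num) (by omega)
  have : (2 : ℝ) ^ k * Δ ≤ ⌈(4 : ℝ) * (Δ : ℝ) ^ ((1 : ℝ) / ((k : ℝ) - 1))⌉₊ ^ (k - 1) :=
    calc (2 : ℝ) ^ k * Δ ≤ 4 ^ (k - 1) * Δ := by gcongr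
      _ = (4 * (Δ : ℝ) ^ ((1 : ℝ) / ((k : ℝ) - 1))) ^ (k - 1) := by rw [mul_pow, hroot]
      _ ≤ _ := by gcongr; exact Nat.le_ceil _
  exact_mod_cast this

/-- Every k-uniform hypergraph with maximum degree Δ ≥ 1 has a proper coloring
(no edge monochromatic) with at most ⌈4·Δ^(1/(k-1))⌉ colors. -/
theorem stmt0 (V : Type) [Fintype V] [DecidableEq V] (E : Finset (Finset V))
    (k Δ : ℕ) (hk : 2 ≤ k) (hΔ : 1 ≤ Δ)
    (huniform : ∀ e ∈ E, e.card = k)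
    (hdeg : ∀ v : V, (E.filter (fun e => v ∈ e)).card ≤ Δ) :
    ∃ f : V → Fin (⌈(4 : ℝ) * (Δ : ℝ) ^ ((1 : ℝ) / ((k : ℝ) - 1))⌉₊),
      ∀ e ∈ E, ∃ x ∈ e, ∃ y ∈ e, f x ≠ f y := by
  have hΔpos : (0 : ℝ) < Δ := by exact_mod_cast hΔ
  have : NeZero ⌈(4 : ℝ) * (Δ : ℝ) ^ ((1 : ℝ) / ((k : ℝ) - 1))⌉₊ :=
    ⟨(Nat.ceil_pos.2 (by positivity)).ne'⟩
  obtain ⟨f, hf⟩ := exists_isProperOn_univ (α := Fin _) (by omega)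
    (by rw [Fintype.card_fin]; exact two_pow_mul_le_ceil_pow k Δ hk) huniform hdeg
  exact ⟨f, fun e he => hf e he (subset_univ e)⟩
end

section
/- Every k-uniform hypergraph with n vertices and average degree d ≥ 1 contains an independent set of size at least c·n/d^(1/(k-1)), where c > 0 depends only on k. -/
/-!
Pick a random vertex set `A` containing each vertex independently with probability `p`. In
expectation `A` has `n p` vertices and contains `|E| p^k` edges, and deleting one vertex from
each edge inside `A` leaves an independent set. For `p = d^{-1/(k-1)}` we get
`|E| p^k = n p / k ≤ n p / 2`, so some independent set has at least `n p / 2` vertices.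
Expectations are written as sums over all subsets weighted by `p^|A| (1-p)^(n-|A|)`.
-/

open Finset

section BernoulliWeight

variable {R V : Type*} [CommRing R] [Fintype V]

def bernoulliWeight (p : R) (A : Finset V) : R :=
  p ^ #A * (1 - p) ^ (Fintype.card V - #A)

theorem sum_bernoulliWeight (p : R) : ∑ A : Finset V, bernoulliWeight p A = 1 := by
  simp [bernoulliWeight, Fintype.sum_pow_mul_eq_add_pow]

theorem bernoulliWeight_nonneg [LinearOrder R] [IsStrictOrderedRing R] {p : R} (hp₀ : 0 ≤ p)
    (hp₁ : p ≤ 1) (A : Finset V) : 0 ≤ bernoulliWeight p A :=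
  mul_nonneg (pow_nonneg hp₀ _) (pow_nonneg (sub_nonneg.mpr hp₁) _)

variable [DecidableEq V]

theorem sum_bernoulliWeight_filter_superset (p : R) (e : Finset V) :
    ∑ A : Finset V with e ⊆ A, bernoulliWeight p A = p ^ #e := by
  have hsupersets : ({A | e ⊆ A} : Finset (Finset V)) = eᶜ.powerset.image (e ∪ ·) := by
    rw [compl_eq_univ_sdiff, ← Icc_eq_image_powerset (subset_univ e)]
    ext; simp
  have hinj : Set.InjOn (e ∪ ·) (eᶜ.powerset : Set (Finset V)) := by
    intro B₁ hB₁ B₂ hB₂ h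
    simp only [coe_powerset, Set.mem_preimage, Set.mem_powerset_iff, coe_subset,
      subset_compl_iff_disjoint_left] at hB₁ hB₂
    simpa [union_sdiff_cancel_left hB₁, union_sdiff_cancel_left hB₂] using
      congrArg (· \ e) h
  have hterm : ∀ B ∈ eᶜ.powerset, bernoulliWeight p (e ∪ B) =
      p ^ #e * (p ^ #B * (1 - p) ^ (#eᶜ - #B)) := by
    intro B hB
    have hdisj : Disjoint e B := subset_compl_iff_disjoint_left.mp (mem_powerset.mp hB)
    rw [bernoulliWeight, card_union_of_disjoint hdisj, card_compl, Nat.sub_sub, pow_add, mul_assoc]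
  rw [hsupersets, sum_image hinj, sum_congr rfl hterm, ← mul_sum, sum_pow_mul_eq_add_pow]
  simp

theorem sum_bernoulliWeight_mul_card_filter {ι : Type*} (p : R) (T : Finset ι)
    (f : ι → Finset V) :
    ∑ A : Finset V, bernoulliWeight p A * #{t ∈ T | f t ⊆ A} = ∑ t ∈ T, p ^ #(f t) := by
  simp_rw [natCast_card_filter, mul_sum, mul_ite, mul_one, mul_zero]
  rw [sum_comm]
  refine sum_congr rfl fun t _ => ?_
  rw [← sum_filter, sum_bernoulliWeight_filter_superset]

end BernoulliWeight

theorem Finset.exists_sum_mul_le {ι R : Type*} [CommRing R] [LinearOrder R]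
    [IsStrictOrderedRing R] {s : Finset ι} {w f : ι → R} (hw₀ : ∀ i ∈ s, 0 ≤ w i)
    (hw₁ : ∑ i ∈ s, w i = 1) : ∃ i ∈ s, ∑ j ∈ s, w j * f j ≤ f i := by
  have hs : s.Nonempty := nonempty_of_sum_ne_zero (hw₁ ▸ one_ne_zero)
  obtain ⟨i, hi, hmax⟩ := s.exists_max_image f hs
  refine ⟨i, hi, ?_⟩
  calc ∑ j ∈ s, w j * f j ≤ ∑ j ∈ s, w j * f i :=
        sum_le_sum fun j hj => mul_le_mul_of_nonneg_left (hmax j hj) (hw₀ j hj)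
    _ = f i := by rw [← sum_mul, hw₁, one_mul]

theorem Finset.exists_card_le_forall_exists_mem {α : Type*} [DecidableEq α]
    (F : Finset (Finset α)) (hF : ∀ e ∈ F, e.Nonempty) :
    ∃ T : Finset α, #T ≤ #F ∧ ∀ e ∈ F, ∃ x ∈ T, x ∈ e := by
  choose g hg using hF
  refine ⟨F.attach.image fun e => g e.1 e.2, card_image_le.trans_eq card_attach, ?_⟩
  intro e he
  exact ⟨g e he, mem_image_of_mem _ (mem_attach F ⟨e, he⟩), hg e he⟩

theorem exists_independent_card_ge {R V : Type*} [CommRing R] [LinearOrder R]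
    [IsStrictOrderedRing R] [Fintype V] [DecidableEq V] (E : Finset (Finset V))
    (hE : ∀ e ∈ E, e.Nonempty) {p : R} (hp₀ : 0 ≤ p) (hp₁ : p ≤ 1) :
    ∃ S : Finset V, (∀ e ∈ E, ¬ e ⊆ S) ∧ Fintype.card V * p - ∑ e ∈ E, p ^ #e ≤ #S := by
  have hcard : ∀ A : Finset V, #{v ∈ (univ : Finset V) | {v} ⊆ A} = #A := fun A => by
    simp [singleton_subset_iff]
  have hmean : ∑ A : Finset V, bernoulliWeight p A * ((#A : R) - #{e ∈ E | e ⊆ A}) =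
      Fintype.card V * p - ∑ e ∈ E, p ^ #e := by
    have hsize := sum_bernoulliWeight_mul_card_filter p (univ : Finset V) singleton
    have hedges := sum_bernoulliWeight_mul_card_filter p E id
    simp only [hcard, id, card_singleton, pow_one, sum_const, card_univ, nsmul_eq_mul]
      at hsize hedges
    simp only [mul_sub, sum_sub_distrib, hsize, hedges]
  obtain ⟨A, -, hA⟩ := exists_sum_mul_le (s := univ)
    (fun A _ => bernoulliWeight_nonneg hp₀ hp₁ A) (sum_bernoulliWeight p)
    (f := fun A : Finset V => (#A : R) - #{e ∈ E | e ⊆ A})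
  rw [hmean] at hA
  obtain ⟨T, hT, hhit⟩ := exists_card_le_forall_exists_mem {e ∈ E | e ⊆ A}
    fun e he => hE e (mem_filter.mp he).1
  refine ⟨A \ T, fun e he heS => ?_, ?_⟩
  · obtain ⟨x, hxT, hxe⟩ := hhit e (mem_filter.mpr ⟨he, heS.trans sdiff_subset⟩)
    exact (mem_sdiff.mp (heS hxe)).2 hxT
  · have hdeleted : #A ≤ #(A \ T) + #{e ∈ E | e ⊆ A} :=
      card_le_card_sdiff_add_card.trans (by gcongr)
    have : (#A : R) ≤ #(A \ T) + #{e ∈ E | e ⊆ A} := by exact_mod_cast hdeleted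
    linarith

theorem rpow_one_div_sub_one_pow {d : ℝ} (hd : 0 ≤ d) {k : ℕ} (hk : 2 ≤ k) :
    (d ^ (1 / ((k : ℝ) - 1))) ^ (k - 1) = d := by
  have hcast : (1 / ((k : ℝ) - 1)) = ((k - 1 : ℕ) : ℝ)⁻¹ := by
    rw [Nat.cast_sub (by omega), Nat.cast_one, one_div]
  rw [hcast, Real.rpow_inv_natCast_pow hd (by omega)]

/-- Every k-uniform hypergraph with n vertices and average degree d ≥ 1 has an
independent set of size at least c·n/d^(1/(k-1)), c depending only on k. -/
theorem stmt1 (k : ℕ) (hk : 2 ≤ k) :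
    ∃ c : ℝ, 0 < c ∧
      ∀ (V : Type) [Fintype V] [DecidableEq V] (E : Finset (Finset V)),
        (∀ e ∈ E, e.card = k) →
        (1 : ℝ) ≤ ((k : ℝ) * E.card) / (Fintype.card V) →
        ∃ S : Finset V, (∀ e ∈ E, ¬ e ⊆ S) ∧
          c * (Fintype.card V) /
              (((k : ℝ) * E.card) / (Fintype.card V)) ^ ((1 : ℝ) / ((k : ℝ) - 1))
            ≤ S.card := by
  refine ⟨1 / 2, by norm_num, fun V _ _ E huniform hd => ?_⟩
  set n : ℝ := (Fintype.card V : ℝ)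
  set d : ℝ := k * #E / n
  have hn : n ≠ 0 := by rintro hn; norm_num [d, hn] at hd
  have hE : (#E : ℝ) ≠ 0 := by rintro hE; norm_num [d, hE] at hd
  have hk' : (2 : ℝ) ≤ k := by exact_mod_cast hk
  set q := d ^ (1 / ((k : ℝ) - 1))
  have hq : 1 ≤ q := Real.one_le_rpow hd (by rw [one_div_nonneg]; linarith)
  obtain ⟨S, hS, hsize⟩ := exists_independent_card_ge E
    (fun e he => card_pos.mp (by rw [huniform e he]; omega))
    (inv_nonneg.mpr (zero_le_one.trans hq)) (inv_le_one_of_one_le₀ hq)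
  have hedges : ∑ e ∈ E, q⁻¹ ^ #e = n * q⁻¹ / k := by
    have hpow : q⁻¹ ^ k = q⁻¹ * d⁻¹ := by
      rw [← Nat.sub_add_cancel (by omega : 1 ≤ k), pow_succ', inv_pow,
        rpow_one_div_sub_one_pow (by linarith) hk]
    rw [sum_congr rfl fun e he => by rw [huniform e he], sum_const, nsmul_eq_mul, hpow]
    simp only [d]
    field_simp
  refine ⟨S, hS, ?_⟩
  change n * q⁻¹ - _ ≤ _ at hsize
  rw [hedges] at hsize
  have : n * q⁻¹ / k ≤ n * q⁻¹ / 2 := div_le_div_of_nonneg_left (by positivity) two_pos hk'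
  rw [div_eq_mul_inv (1 / 2 * n)]
  linarith
end

section
/- Let H be a simple k-uniform hypergraph, v a vertex, and consider the family F of (3k−4)-sets S_{x,y} = T_v(x) ∪ T_v(y) ∪ T indexed by covered pairs {x,y} in N_H(v), where T is the (k−2)-set with T ∪ {x,y} ∈ E and T_v(x), T_v(y) are the unique (k−1)-sets with T_v(x)∪{v}, T_v(y)∪{v} edges. Then for any vertex set A with |A| ≥ k, the number of members of F containing A is at most 14k⁴ (i.e., O(1) depending only on k). -/
/-!
No member of the family contains `A` when `v ∈ A`, so let `v ∉ A`. Fix `a₀ ∈ A` and a second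
vertex `a₁ ∈ A` outside the edge through `v` and `a₀`, which meets `A` in at most `k - 1` vertices.
If `A ⊆ T_v(x) ∪ T_v(y) ∪ T`, locating `a₀` and `a₁` among the three parts puts `x` in the edge
through `v` and `a₀`, through `v` and `a₁`, or through `a₀` and `a₁`, or in an edge joining `a₀`
(resp. `a₁`) to a vertex of the edge through `v` and `a₁` (resp. `a₀`); the case
`a₀, a₁ ∈ T_v(y)` is ruled out by the choice of `a₁`. In a linear `k`-uniform hypergraph there are
at most `2k² + 3k` such candidates, and by symmetry `y` is one too, so at most
`(2k² + 3k).choose 2 ≤ 14k⁴` pairs are counted.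
-/

namespace Hypergraph

open Finset

variable {V : Type*} [DecidableEq V]

def IsLinear (E : Finset (Finset V)) : Prop :=
  ∀ e ∈ E, ∀ f ∈ E, e ≠ f → (e ∩ f).card ≤ 1

/-- The union of the edges containing `a` and `b`: for a linear hypergraph and `a ≠ b`, the edge
through `a` and `b` if there is one, and `∅` otherwise. -/
def edgeThrough (E : Finset (Finset V)) (a b : V) : Finset V :=
  (E.filter fun e => a ∈ e ∧ b ∈ e).sup id

def edgeThroughSome (E : Finset (Finset V)) (a : V) (s : Finset V) : Finset V :=
  (s.erase a).biUnion (edgeThrough E a)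

variable {E : Finset (Finset V)} {k : ℕ} {a b v x : V}

theorem subset_edgeThrough {e : Finset V} (he : e ∈ E) (ha : a ∈ e) (hb : b ∈ e) :
    e ⊆ edgeThrough E a b :=
  le_sup (f := id) (mem_filter.mpr ⟨he, ha, hb⟩)

theorem mem_edgeThroughSome {s e : Finset V} (he : e ∈ E) (hae : a ∈ e) (hbs : b ∈ s) (hbe : b ∈ e)
    (hab : b ≠ a) (hx : x ∈ e) : x ∈ edgeThroughSome E a s :=
  mem_biUnion.mpr ⟨b, mem_erase.mpr ⟨hab, hbs⟩, subset_edgeThrough he hae hbe hx⟩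

theorem IsLinear.eq_of_mem {e f : Finset V} (hE : IsLinear E) (he : e ∈ E) (hf : f ∈ E)
    (hab : a ≠ b) (hae : a ∈ e) (hbe : b ∈ e) (haf : a ∈ f) (hbf : b ∈ f) : e = f := by
  by_contra hne
  have : ({a, b} : Finset V) ⊆ e ∩ f := by
    simp only [insert_subset_iff, singleton_subset_iff, mem_inter]
    exact ⟨⟨hae, haf⟩, hbe, hbf⟩
  have := card_le_card this
  rw [card_pair hab] at this
  exact absurd (hE e he f hf hne) (by omega)

theorem IsLinear.edgeThrough_eq {e : Finset V} (hE : IsLinear E) (he : e ∈ E) (hab : a ≠ b)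
    (ha : a ∈ e) (hb : b ∈ e) : edgeThrough E a b = e := by
  refine (Finset.sup_le fun f hf => ?_).antisymm (subset_edgeThrough he ha hb)
  obtain ⟨hf, haf, hbf⟩ := mem_filter.mp hf
  exact (hE.eq_of_mem hf he hab haf hbf ha hb).le

theorem IsLinear.edgeThrough_eq_empty_or (hE : IsLinear E) (hab : a ≠ b) :
    edgeThrough E a b = ∅ ∨ ∃ e ∈ E, a ∈ e ∧ b ∈ e ∧ edgeThrough E a b = e := by
  by_cases h : ∃ e ∈ E, a ∈ e ∧ b ∈ e
  · obtain ⟨e, he, ha, hb⟩ := h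
    exact .inr ⟨e, he, ha, hb, hE.edgeThrough_eq he hab ha hb⟩
  · push Not at h
    left
    rw [edgeThrough, filter_eq_empty_iff.mpr fun e he hab => h e he hab.1 hab.2, sup_empty]
    rfl

theorem card_edgeThrough_le (hE : IsLinear E) (hunif : ∀ e ∈ E, e.card = k) (hab : a ≠ b) :
    (edgeThrough E a b).card ≤ k := by
  obtain h | ⟨e, he, -, -, h⟩ := hE.edgeThrough_eq_empty_or hab
  · simp [h]
  · rw [h, hunif e he]

theorem card_edgeThroughSome_le (hE : IsLinear E) (hunif : ∀ e ∈ E, e.card = k) (s : Finset V) :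
    (edgeThroughSome E a s).card ≤ s.card * k :=
  (card_biUnion_le_card_mul _ _ k fun _ hb =>
    card_edgeThrough_le hE hunif (mem_erase.mp hb).1.symm).trans
    (Nat.mul_le_mul_right k card_erase_le)

theorem exists_mem_ne_notMem_edgeThrough (hE : IsLinear E) (hunif : ∀ e ∈ E, e.card = k)
    {A : Finset V} (hk : 2 ≤ k) (hA : k ≤ A.card) (hvA : v ∉ A) {a₀ : V} (ha₀ : a₀ ∈ A) :
    ∃ a₁ ∈ A, a₁ ≠ a₀ ∧ a₁ ∉ edgeThrough E v a₀ := by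
  by_contra! h
  have hsub : A ⊆ (insert a₀ (edgeThrough E v a₀)).erase v := fun a ha =>
    mem_erase.mpr ⟨ne_of_mem_of_not_mem ha hvA, by
      by_cases h' : a = a₀
      · exact h' ▸ mem_insert_self _ _
      · exact mem_insert_of_mem (h a ha h')⟩
  have hcard := card_le_card hsub
  obtain h0 | ⟨e, he, hve, ha₀e, h0⟩ :=
    hE.edgeThrough_eq_empty_or (ne_of_mem_of_not_mem ha₀ hvA).symm
  · rw [h0, insert_empty] at hcard
    have := card_erase_le (s := {a₀}) (a := v)
    rw [card_singleton] at this
    omega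
  · rw [h0, insert_eq_of_mem ha₀e, card_erase_of_mem hve, hunif e he] at hcard
    omega

def candidates (E : Finset (Finset V)) (v a₀ a₁ : V) : Finset V :=
  edgeThrough E v a₀ ∪ edgeThrough E v a₁ ∪ edgeThrough E a₀ a₁ ∪
    edgeThroughSome E a₀ (edgeThrough E v a₁) ∪ edgeThroughSome E a₁ (edgeThrough E v a₀)

theorem card_candidates_le (hE : IsLinear E) (hunif : ∀ e ∈ E, e.card = k) {a₀ a₁ : V}
    (hv₀ : v ≠ a₀) (hv₁ : v ≠ a₁) (h₀₁ : a₀ ≠ a₁) :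
    (candidates E v a₀ a₁).card ≤ 2 * k ^ 2 + 3 * k := by
  have h₀ := card_edgeThrough_le hE hunif hv₀
  have h₁ := card_edgeThrough_le hE hunif hv₁
  have h₀₁ := card_edgeThrough_le hE hunif h₀₁
  have s₀ := (card_edgeThroughSome_le hE hunif (a := a₀) _).trans (Nat.mul_le_mul_right k h₁)
  have s₁ := (card_edgeThroughSome_le hE hunif (a := a₁) _).trans (Nat.mul_le_mul_right k h₀)
  unfold candidates
  grw [card_union_le, card_union_le, card_union_le, card_union_le]
  nlinarith

theorem mem_candidates {A ex ey f : Finset V} {y a₀ a₁ : V} (hex : ex ∈ E) (hey : ey ∈ E)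
    (hf : f ∈ E) (hvx : v ∈ ex) (hxx : x ∈ ex) (hvy : v ∈ ey) (hyy : y ∈ ey) (hxf : x ∈ f)
    (hyf : y ∈ f) (hA : A ⊆ ex ∪ ey ∪ f.erase y) (ha₀ : a₀ ∈ A) (ha₁ : a₁ ∈ A)
    (h₁ : a₁ ∉ edgeThrough E v a₀) : x ∈ candidates E v a₀ a₁ := by
  simp only [candidates, mem_union]
  have hloc : ∀ a ∈ A, a ∈ ex ∨ a ∈ ey ∨ (a ∈ f ∧ a ≠ y) := fun a ha => by
    simpa [or_assoc, and_comm] using hA ha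
  obtain h0x | h0y | ⟨h0f, h0y⟩ := hloc a₀ ha₀
  · exact .inl (.inl (.inl (.inl (subset_edgeThrough hex hvx h0x hxx))))
  all_goals obtain h1x | h1y | ⟨h1f, h1y⟩ := hloc a₁ ha₁
  · exact .inl (.inl (.inl (.inr (subset_edgeThrough hex hvx h1x hxx))))
  · exact absurd (subset_edgeThrough hey hvy h0y h1y) h₁
  · exact .inr (mem_edgeThroughSome hf h1f (subset_edgeThrough hey hvy h0y hyy) hyf h1y.symm hxf)
  · exact .inl (.inl (.inl (.inr (subset_edgeThrough hex hvx h1x hxx))))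
  · exact .inl (.inr (mem_edgeThroughSome hf h0f (subset_edgeThrough hey hvy h1y hyy) hyf
      h0y.symm hxf))
  · exact .inl (.inl (.inr (subset_edgeThrough hf h0f h1f hxf)))

theorem mem_candidates_of_subset_union {A Tx Ty T : Finset V} {y a₀ a₁ : V}
    (hex : insert v Tx ∈ E) (hey : insert v Ty ∈ E) (hf : insert x (insert y T) ∈ E)
    (hxTx : x ∈ Tx) (hyTy : y ∈ Ty) (hyT : y ∉ T) (hA : A ⊆ Tx ∪ Ty ∪ T) (ha₀ : a₀ ∈ A)
    (ha₁ : a₁ ∈ A) (h₁ : a₁ ∉ edgeThrough E v a₀) : x ∈ candidates E v a₀ a₁ := by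
  have hT : T ⊆ (insert x (insert y T)).erase y := fun t ht =>
    mem_erase.mpr ⟨ne_of_mem_of_not_mem ht hyT, mem_insert_of_mem (mem_insert_of_mem ht)⟩
  refine mem_candidates hex hey hf (mem_insert_self _ _) (mem_insert_of_mem hxTx)
    (mem_insert_self _ _) (mem_insert_of_mem hyTy) (mem_insert_self _ _)
    (mem_insert_of_mem (mem_insert_self _ _)) (hA.trans ?_) ha₀ ha₁ h₁
  gcongr <;> exact subset_insert _ _

end Hypergraph

theorem choose_two_le_fourteen_mul_pow_four (k : ℕ) :
    (2 * k ^ 2 + 3 * k).choose 2 ≤ 14 * k ^ 4 := by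
  rw [Nat.choose_two_right]
  refine Nat.div_le_of_le_mul ?_
  rcases Nat.eq_zero_or_pos k with rfl | hk
  · simp
  have h3 : k ^ 3 ≤ k ^ 4 := Nat.pow_le_pow_right hk (by norm_num)
  have h2 : k ^ 2 ≤ k ^ 4 := Nat.pow_le_pow_right hk (by norm_num)
  calc (2 * k ^ 2 + 3 * k) * (2 * k ^ 2 + 3 * k - 1)
      ≤ (2 * k ^ 2 + 3 * k) * (2 * k ^ 2 + 3 * k) := Nat.mul_le_mul_left _ (Nat.sub_le _ _)
    _ ≤ 2 * (14 * k ^ 4) := by nlinarith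

open Finset Hypergraph in
theorem stmt5_general (V : Type) [DecidableEq V] (E : Finset (Finset V)) (k : ℕ)
    (hk : 3 ≤ k)
    (huniform : ∀ e ∈ E, e.card = k)
    (hsimple : ∀ e ∈ E, ∀ f ∈ E, e ≠ f → (e ∩ f).card ≤ 1)
    (v : V) (A : Finset V) (hA : k ≤ A.card) :
    {p : Finset V | ∃ x y : V, x ≠ y ∧ p = {x, y} ∧ x ≠ v ∧ y ≠ v ∧
        ∃ Tx Ty T : Finset V,
          v ∉ Tx ∧ x ∈ Tx ∧ insert v Tx ∈ E ∧
          v ∉ Ty ∧ y ∈ Ty ∧ insert v Ty ∈ E ∧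
          x ∉ T ∧ y ∉ T ∧ v ∉ T ∧ insert x (insert y T) ∈ E ∧
          A ⊆ Tx ∪ Ty ∪ T}.ncard
      ≤ 14 * k ^ 4 := by
  by_cases hvA : v ∈ A
  · refine (Set.ncard_le_ncard (t := ∅) ?_).trans (by simp)
    rintro _ ⟨-, -, -, -, -, -, Tx, Ty, T, hvTx, -, -, hvTy, -, -, -, -, hvT, -, hAT⟩
    simpa [hvTx, hvTy, hvT] using hAT hvA
  obtain ⟨a₀, ha₀⟩ : A.Nonempty := card_pos.mp (by omega)
  obtain ⟨a₁, ha₁, h₁₀, h₁⟩ :=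
    exists_mem_ne_notMem_edgeThrough hsimple huniform (by omega) hA hvA ha₀
  refine (Set.ncard_le_ncard (t := (candidates E v a₀ a₁).powersetCard 2) ?_
    (finite_toSet _)).trans ?_
  · rintro _ ⟨x, y, hxy, rfl, -, -, Tx, Ty, T, -, hxTx, hex, -, hyTy, hey, hxT, hyT, -, hf, hAT⟩
    rw [mem_coe, mem_powersetCard, card_pair hxy, insert_subset_iff, singleton_subset_iff]
    refine ⟨⟨?_, ?_⟩, rfl⟩
    · exact mem_candidates_of_subset_union hex hey hf hxTx hyTy hyT hAT ha₀ ha₁ h₁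
    · exact mem_candidates_of_subset_union hey hex (insert_comm x y T ▸ hf) hyTy hxTx hxT
        (union_comm Tx Ty ▸ hAT) ha₀ ha₁ h₁
  calc _ = (candidates E v a₀ a₁).card.choose 2 := by rw [Set.ncard_coe_finset, card_powersetCard]
    _ ≤ (2 * k ^ 2 + 3 * k).choose 2 := Nat.choose_le_choose 2 <|
        card_candidates_le hsimple huniform (ne_of_mem_of_not_mem ha₀ hvA).symm
          (ne_of_mem_of_not_mem ha₁ hvA).symm h₁₀.symm
    _ ≤ 14 * k ^ 4 := choose_two_le_fourteen_mul_pow_four k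

/-- For the family F of (3k−4)-sets S_{x,y} = T_v(x) ∪ T_v(y) ∪ T indexed by covered
pairs {x,y} in N_H(v) of a simple k-uniform hypergraph, any vertex set A with
|A| ≥ k is contained in at most 14k⁴ members of F. -/
theorem stmt5 (V : Type) [DecidableEq V] [Fintype V] (E : Finset (Finset V)) (k : ℕ)
    (hk : 3 ≤ k)
    (huniform : ∀ e ∈ E, e.card = k)
    (hsimple : ∀ e ∈ E, ∀ f ∈ E, e ≠ f → (e ∩ f).card ≤ 1)
    (v : V) (A : Finset V) (hA : k ≤ A.card) :
    {p : Finset V | ∃ x y : V, x ≠ y ∧ p = {x, y} ∧ x ≠ v ∧ y ≠ v ∧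
        ∃ Tx Ty T : Finset V,
          v ∉ Tx ∧ x ∈ Tx ∧ insert v Tx ∈ E ∧
          v ∉ Ty ∧ y ∈ Ty ∧ insert v Ty ∈ E ∧
          x ∉ T ∧ y ∉ T ∧ v ∉ T ∧ insert x (insert y T) ∈ E ∧
          A ⊆ Tx ∪ Ty ∪ T}.ncard
      ≤ 14 * k ^ 4 :=
  stmt5_general V E k hk huniform hsimple v A hA
end

section
/- Let H be a simple k-uniform hypergraph with maximum degree Δ, v a vertex, and F the family of (3k−4)-sets S_{x,y} associated to covered pairs as above. Then for any nonempty vertex set A with 1 ≤ |A| ≤ k−1, the number of members of F containing A is at most C·Δ for a constant C depending only on k. -/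
/-!
Pick `a ∈ A`; we may assume `a ≠ v`, since `v` lies in none of the three parts of `S_{x,y}`.
If `a ∈ T`, the pair `{x, y}` lies in an edge through `a`: at most `Δ · C(k, 2)` choices.
If `a ∈ T_v(x)`, then `x` lies in an edge through both `v` and `a`, which by simplicity is unique,
so there are at most `k` choices of `x`, and then `{x, y}` lies in an edge through `x`.
The case `a ∈ T_v(y)` is symmetric, so `(k + 1) · C(k, 2) · Δ` bounds the count.
-/

namespace Hypergraph

open Finset

variable {V : Type*} [DecidableEq V] (E : Finset (Finset V))

def pairsThrough (w : V) : Finset (Finset V) :=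
  (E.filter (w ∈ ·)).biUnion (·.powersetCard 2)

def spanOfPair (a b : V) : Finset V :=
  (E.filter fun e => a ∈ e ∧ b ∈ e).biUnion id

/-- The covered pairs `{x, y} ⊆ N(v)` with `A ⊆ S_{x,y}`;
`Tx`, `Ty` stand for `T_v(x)`, `T_v(y)`. -/
def coveredPairsSpanning (v : V) (A : Finset V) : Set (Finset V) :=
  {p | ∃ x y : V, x ≠ y ∧ p = {x, y} ∧ x ≠ v ∧ y ≠ v ∧
    ∃ Tx Ty T : Finset V,
      v ∉ Tx ∧ x ∈ Tx ∧ insert v Tx ∈ E ∧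
      v ∉ Ty ∧ y ∈ Ty ∧ insert v Ty ∈ E ∧
      x ∉ T ∧ y ∉ T ∧ v ∉ T ∧ insert x (insert y T) ∈ E ∧
      A ⊆ Tx ∪ Ty ∪ T}

variable {E}

theorem pair_mem_pairsThrough {w x y : V} {f : Finset V} (hf : f ∈ E) (hw : w ∈ f)
    (hx : x ∈ f) (hy : y ∈ f) (hxy : x ≠ y) : {x, y} ∈ pairsThrough E w :=
  mem_biUnion.2 ⟨f, mem_filter.2 ⟨hf, hw⟩,
    mem_powersetCard.2 ⟨insert_subset hx (singleton_subset_iff.2 hy), card_pair hxy⟩⟩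

theorem card_pairsThrough_le {k Δ : ℕ} {w : V} (hcard : ∀ e ∈ E, e.card = k)
    (hdeg : (E.filter (w ∈ ·)).card ≤ Δ) : (pairsThrough E w).card ≤ Δ * k.choose 2 :=
  (card_biUnion_le_card_mul _ _ _ fun e he => by
      rw [card_powersetCard, hcard e (mem_filter.1 he).1]).trans
    (Nat.mul_le_mul_right _ hdeg)

theorem card_filter_mem_mem_le_one (hsimple : ∀ e ∈ E, ∀ f ∈ E, e ≠ f → (e ∩ f).card ≤ 1)
    {a b : V} (hab : a ≠ b) : (E.filter fun e => a ∈ e ∧ b ∈ e).card ≤ 1 := by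
  refine card_le_one.2 fun e he f hf => by_contra fun hne => ?_
  simp only [mem_filter] at he hf
  have hpair : ({a, b} : Finset V) ⊆ e ∩ f := by
    simp [insert_subset_iff, he.2, hf.2]
  have := card_le_card hpair
  rw [card_pair hab] at this
  exact absurd (hsimple e he.1 f hf.1 hne) (by omega)

theorem card_spanOfPair_le {k : ℕ} (hcard : ∀ e ∈ E, e.card = k)
    (hsimple : ∀ e ∈ E, ∀ f ∈ E, e ≠ f → (e ∩ f).card ≤ 1) {a b : V} (hab : a ≠ b) :
    (spanOfPair E a b).card ≤ k :=
  (card_biUnion_le_card_mul _ _ k fun e he => (hcard e (mem_filter.1 he).1).le).trans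
    (by simpa using Nat.mul_le_mul_right k (card_filter_mem_mem_le_one hsimple hab))

theorem coveredPairsSpanning_eq_empty {v : V} {A : Finset V} (hvA : v ∈ A) :
    coveredPairsSpanning E v A = ∅ := by
  refine Set.eq_empty_iff_forall_notMem.2 ?_
  rintro p ⟨x, y, -, -, -, -, Tx, Ty, T, hvTx, -, -, hvTy, -, -, -, -, hvT, -, hA⟩
  simpa [hvTx, hvTy, hvT] using hA hvA

theorem coveredPairsSpanning_subset {v a : V} {A : Finset V} (ha : a ∈ A) :
    coveredPairsSpanning E v A ⊆
      ↑(pairsThrough E a ∪ (spanOfPair E v a).biUnion (pairsThrough E)) := by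
  rintro p ⟨x, y, hxy, rfl, -, -, Tx, Ty, T, -, hxTx, heTx, -, hyTy, heTy, -, -, -, heT, hA⟩
  have hx : x ∈ insert x (insert y T) := mem_insert_self _ _
  have hy : y ∈ insert x (insert y T) := mem_insert_of_mem (mem_insert_self _ _)
  have hspan {z : V} {Tz : Finset V} (hTz : insert v Tz ∈ E) (hz : z ∈ Tz) (haTz : a ∈ Tz) :
      z ∈ spanOfPair E v a :=
    mem_biUnion.2 ⟨insert v Tz, mem_filter.2 ⟨hTz, mem_insert_self _ _, mem_insert_of_mem haTz⟩,
      mem_insert_of_mem hz⟩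
  simp only [coe_union, Set.mem_union, mem_coe, mem_biUnion]
  rcases mem_union.1 (hA ha) with haTxy | haT
  · right
    rcases mem_union.1 haTxy with haTx | haTy
    · exact ⟨x, hspan heTx hxTx haTx, pair_mem_pairsThrough heT hx hx hy hxy⟩
    · exact ⟨y, hspan heTy hyTy haTy, pair_mem_pairsThrough heT hy hx hy hxy⟩
  · exact .inl (pair_mem_pairsThrough heT (mem_insert_of_mem (mem_insert_of_mem haT)) hx hy hxy)

theorem ncard_coveredPairsSpanning_le {k Δ : ℕ} (hcard : ∀ e ∈ E, e.card = k)
    (hsimple : ∀ e ∈ E, ∀ f ∈ E, e ≠ f → (e ∩ f).card ≤ 1)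
    (hdeg : ∀ w : V, (E.filter (w ∈ ·)).card ≤ Δ) (v : V) {A : Finset V} (hA : 1 ≤ A.card) :
    (coveredPairsSpanning E v A).ncard ≤ (k + 1) * k.choose 2 * Δ := by
  by_cases hvA : v ∈ A
  · simp [coveredPairsSpanning_eq_empty hvA]
  obtain ⟨a, ha⟩ := card_pos.1 hA
  have hva : v ≠ a := ne_of_mem_of_not_mem ha hvA |>.symm
  calc (coveredPairsSpanning E v A).ncard
      ≤ (pairsThrough E a ∪ (spanOfPair E v a).biUnion (pairsThrough E)).card := by
        rw [← Set.ncard_coe_finset]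
        exact Set.ncard_le_ncard (coveredPairsSpanning_subset ha) (finite_toSet _)
    _ ≤ Δ * k.choose 2 + k * (Δ * k.choose 2) :=
        (card_union_le _ _).trans <| add_le_add (card_pairsThrough_le hcard (hdeg a)) <|
          card_biUnion_le_card_mul _ _ _ (fun w _ => card_pairsThrough_le hcard (hdeg w)) |>.trans
            (Nat.mul_le_mul_right _ (card_spanOfPair_le hcard hsimple hva))
    _ = (k + 1) * k.choose 2 * Δ := by ring

end Hypergraph

theorem stmt6_general (k : ℕ) :
    ∃ C : ℕ, ∀ (V : Type) [DecidableEq V] [Fintype V] (E : Finset (Finset V)) (Δ : ℕ),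
      (∀ e ∈ E, e.card = k) →
      (∀ e ∈ E, ∀ f ∈ E, e ≠ f → (e ∩ f).card ≤ 1) →
      (∀ w : V, (E.filter (fun e => w ∈ e)).card ≤ Δ) →
      ∀ (v : V) (A : Finset V), 1 ≤ A.card → A.card ≤ k - 1 →
        {p : Finset V | ∃ x y : V, x ≠ y ∧ p = {x, y} ∧ x ≠ v ∧ y ≠ v ∧
            ∃ Tx Ty T : Finset V,
              v ∉ Tx ∧ x ∈ Tx ∧ insert v Tx ∈ E ∧
              v ∉ Ty ∧ y ∈ Ty ∧ insert v Ty ∈ E ∧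
              x ∉ T ∧ y ∉ T ∧ v ∉ T ∧ insert x (insert y T) ∈ E ∧
              A ⊆ Tx ∪ Ty ∪ T}.ncard
          ≤ C * Δ :=
  ⟨(k + 1) * k.choose 2, fun _ _ _ _ _ hcard hsimple hdeg v _ hA _ =>
    Hypergraph.ncard_coveredPairsSpanning_le hcard hsimple hdeg v hA⟩

/-- For the family F of (3k−4)-sets S_{x,y} associated to covered pairs in the
neighborhood of a vertex v of a simple k-uniform hypergraph of maximum degree Δ,
any set A with 1 ≤ |A| ≤ k−1 is contained in at most C·Δ members of F,
with C depending only on k. -/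
theorem stmt6 (k : ℕ) (hk : 3 ≤ k) :
    ∃ C : ℕ, ∀ (V : Type) [DecidableEq V] [Fintype V] (E : Finset (Finset V)) (Δ : ℕ),
      (∀ e ∈ E, e.card = k) →
      (∀ e ∈ E, ∀ f ∈ E, e ≠ f → (e ∩ f).card ≤ 1) →
      (∀ w : V, (E.filter (fun e => w ∈ e)).card ≤ Δ) →
      ∀ (v : V) (A : Finset V), 1 ≤ A.card → A.card ≤ k - 1 →
        {p : Finset V | ∃ x y : V, x ≠ y ∧ p = {x, y} ∧ x ≠ v ∧ y ≠ v ∧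
            ∃ Tx Ty T : Finset V,
              v ∉ Tx ∧ x ∈ Tx ∧ insert v Tx ∈ E ∧
              v ∉ Ty ∧ y ∈ Ty ∧ insert v Ty ∈ E ∧
              x ∉ T ∧ y ∉ T ∧ v ∉ T ∧ insert x (insert y T) ∈ E ∧
              A ⊆ Tx ∪ Ty ∪ T}.ncard
          ≤ C * Δ :=
  stmt6_general k
end

section
/- In the semi-random coloring procedure, every edge of H is properly colored: it is impossible that all k vertices of an edge receive the same permanent color. Precisely: suppose vertices u_1,…,u_k forming an edge are permanently colored at times t_1 ≤ ⋯ ≤ t_k with colors κ(u_j), where a vertex u colored at time t must have its color in Θ^(t)(u) \ (A^(t)(u) ∪ B^(t)(u)), the sets A^(t)(u) are nondecreasing in t and contain L^(t)(u), and L^(t)(u) contains every color c such that either (i) all other k−1 vertices of an edge through u tentatively activate c at time t, or (ii) an edge e of the auxiliary hypergraph H_i^(t) through u with κ(e) = c has its other i−1 vertices tentatively activating c, where H_i^(t) records edges whose remaining k−i vertices were already permanently colored c. Then not all κ(u_j) are equal. -/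
/-!
Suppose an edge `e` were monochromatic in colour `c`, and let `u ∈ e` be a vertex of `e`
coloured last. At time `t u` every other vertex `w` of `e` has either been coloured `c` earlier,
or is coloured at time `t u` itself, in which case `c = κ w ∈ Θ (t u) w`. Either way the loss
rule puts `c` into `L (t u) u ⊆ A (t u) u`, so `u` could not have received `c`.
-/

section

variable {V C : Type*} {E : Finset (Finset V)} {t : V → ℕ} {κ : V → C} {Θ L : ℕ → V → Set C}

theorem mem_loss_of_monochromatic_of_latest
    (hΘ : ∀ v, κ v ∈ Θ (t v) v)
    (hloss : ∀ (s : ℕ) (u : V) (c : C) (e : Finset V), e ∈ E → u ∈ e →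
      (∀ w ∈ e, w ≠ u → (t w < s ∧ κ w = c) ∨ (s ≤ t w ∧ c ∈ Θ s w)) →
      c ∈ L s u)
    {e : Finset V} (he : e ∈ E) {u : V} (hu : u ∈ e)
    (hlatest : ∀ w ∈ e, t w ≤ t u) (hmono : ∀ w ∈ e, κ w = κ u) :
    κ u ∈ L (t u) u := by
  refine hloss (t u) u (κ u) e he hu fun w hw _ => ?_
  rcases (hlatest w hw).lt_or_eq with hlt | heq
  · exact Or.inl ⟨hlt, hmono w hw⟩
  · exact Or.inr ⟨heq.ge, heq ▸ hmono w hw ▸ hΘ w⟩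

end

theorem stmt17_general (V C : Type) (E : Finset (Finset V)) (k : ℕ)
    (hk : 2 ≤ k)
    (huniform : ∀ e ∈ E, e.card = k)
    (t : V → ℕ) (κ : V → C)
    (Θ A L : ℕ → V → Set C)
    (hcol : ∀ v, κ v ∈ Θ (t v) v ∧ κ v ∉ A (t v) v)
    (hLA : ∀ s v, L s v ⊆ A s v)
    (hloss : ∀ (s : ℕ) (u : V) (c : C) (e : Finset V), e ∈ E → u ∈ e →
      (∀ w ∈ e, w ≠ u → (t w < s ∧ κ w = c) ∨ (s ≤ t w ∧ c ∈ Θ s w)) →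
      c ∈ L s u) :
    ∀ e ∈ E, ∃ x ∈ e, ∃ y ∈ e, κ x ≠ κ y := by
  intro e he
  by_contra! hmono
  have hne : e.Nonempty := by
    rw [← Finset.card_pos, huniform e he]
    omega
  obtain ⟨u, hu, hlatest⟩ := e.exists_max_image t hne
  have hlost := mem_loss_of_monochromatic_of_latest (fun v => (hcol v).1) hloss he hu hlatest
    fun w hw => hmono w hw u hu
  exact (hcol u).2 (hLA _ _ hlost)

/-- Correctness of the semi-random coloring procedure: if every vertex colored at
time t gets a color in Θ^(t)(u) \ A^(t)(u), the sets A are nondecreasing and contain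
the loss sets L, and a color c enters L^(s)(u) whenever in some edge through u every
other vertex was either already permanently colored c or tentatively activates c at
time s, then no edge is monochromatic. -/
theorem stmt17 (V C : Type) [DecidableEq V] (E : Finset (Finset V)) (k : ℕ)
    (hk : 2 ≤ k)
    (huniform : ∀ e ∈ E, e.card = k)
    (hsimple : ∀ e ∈ E, ∀ f ∈ E, e ≠ f → (e ∩ f).card ≤ 1)
    (t : V → ℕ) (κ : V → C)
    (Θ A L : ℕ → V → Set C)
    (hcol : ∀ v, κ v ∈ Θ (t v) v ∧ κ v ∉ A (t v) v)
    (hmono : ∀ s s' v, s ≤ s' → A s v ⊆ A s' v)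
    (hLA : ∀ s v, L s v ⊆ A s v)
    (hloss : ∀ (s : ℕ) (u : V) (c : C) (e : Finset V), e ∈ E → u ∈ e →
      (∀ w ∈ e, w ≠ u → (t w < s ∧ κ w = c) ∨ (s ≤ t w ∧ c ∈ Θ s w)) →
      c ∈ L s u) :
    ∀ e ∈ E, ∃ x ∈ e, ∃ y ∈ e, κ x ≠ κ y :=
  stmt17_general V C E k hk huniform t κ Θ A L hcol hLA hloss
end
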